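/- arXiv:1702.05334 — 8 statements merged into one kernel-verified Lean document; each statement's English description precedes it below -/
import Mathlib

section
/- For a quasi order (X, ≼), the set of finitary downward closed subsets of X (downward closures of finite subsets), ordered by inclusion, is a well quasi order if and only if (X, ≼) is a well quasi order. -/
/-- The downward closure of a set `U` with respect to `r`. -/
def downClosure {X : Type*} (r : X → X → Prop) (U : Set X) : Set X :=
  {x | ∃ u ∈ U, r x u}

/-- A set is a finitary downward closed set if it is the downward closure of a finite set. -/
def FinitaryDownClosed {X : Type*} (r : X → X → Prop) (D : Set X) : Prop :=
  ∃ U : Set X, U.Finite ∧ D = downClosure r U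

/-!
Inclusion of singleton closures `↓{x} ⊆ ↓{y}` is just `x ≼ y`, so a wqo of finitary downward
closed sets restricts to a wqo on `X`. Conversely, `↓U ⊆ ↓V` holds as soon as every element of
`U` lies below some element of `V`; listing the finite generators, Higman's lemma on lists under
the embedding order `List.SublistForall₂` provides such a domination in every sequence.
-/

theorem List.SublistForall₂.exists_mem_rel {α β : Type*} {R : α → β → Prop}
    {l₁ : List α} {l₂ : List β} (h : List.SublistForall₂ R l₁ l₂) {a : α} (ha : a ∈ l₁) :
    ∃ b ∈ l₂, R a b := by
  induction h with
  | nil => simp at ha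
  | cons hab _ ih =>
    rcases List.mem_cons.1 ha with rfl | ha
    · exact ⟨_, List.mem_cons_self, hab⟩
    · obtain ⟨b, hb, hrb⟩ := ih ha
      exact ⟨b, List.mem_cons_of_mem _ hb, hrb⟩
  | cons_right _ ih =>
    obtain ⟨b, hb, hrb⟩ := ih ha
    exact ⟨b, List.mem_cons_of_mem _ hb, hrb⟩

theorem WellQuasiOrdered.exists_lt_forall_exists_rel_of_finite {X : Type*} {r : X → X → Prop}
    [IsPreorder X r] (hr : WellQuasiOrdered r) (U : ℕ → Set X) (hU : ∀ n, (U n).Finite) :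
    ∃ i j, i < j ∧ ∀ u ∈ U i, ∃ v ∈ U j, r u v := by
  have higman := (Set.partiallyWellOrderedOn_univ_iff.2 hr).partiallyWellOrderedOn_sublistForall₂ r
  obtain ⟨i, j, hij, hsub⟩ :=
    higman.exists_lt (f := fun n => (hU n).toFinset.toList) fun _ _ _ => Set.mem_univ _
  refine ⟨i, j, hij, fun u hu => ?_⟩
  obtain ⟨v, hv, huv⟩ := hsub.exists_mem_rel (a := u) (by simpa using hu)
  exact ⟨v, by simpa using hv, huv⟩

section downClosure

variable {X : Type*} {r : X → X → Prop}

theorem downClosure_subset_downClosure [IsTrans X r] {U V : Set X}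
    (h : ∀ u ∈ U, ∃ v ∈ V, r u v) : downClosure r U ⊆ downClosure r V := by
  rintro x ⟨u, hu, hxu⟩
  obtain ⟨v, hv, huv⟩ := h u hu
  exact ⟨v, hv, _root_.trans hxu huv⟩

theorem rel_of_downClosure_singleton_subset [Std.Refl r] {x y : X}
    (h : downClosure r {x} ⊆ downClosure r {y}) : r x y := by
  obtain ⟨_, rfl, hxy⟩ := h ⟨x, rfl, refl x⟩
  exact hxy

end downClosure

/-- The finitary downward closed subsets of `X`, ordered by inclusion,
form a wqo iff `(X, r)` is a wqo. -/
theorem finitaryDownClosed_wqo_iff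
    {X : Type*} (r : X → X → Prop)
    (hrefl : Reflexive r) (htrans : Transitive r) :
    (∀ f : ℕ → Set X, (∀ n, FinitaryDownClosed r (f n)) →
        ∃ i j : ℕ, i < j ∧ f i ⊆ f j) ↔
      (∀ f : ℕ → X, ∃ i j : ℕ, i < j ∧ r (f i) (f j)) := by
  have : IsPreorder X r := { refl := hrefl, trans := htrans }
  constructor
  · intro H f
    obtain ⟨i, j, hij, hsub⟩ :=
      H (fun n => downClosure r {f n}) fun n => ⟨{f n}, Set.finite_singleton _, rfl⟩
    exact ⟨i, j, hij, rel_of_downClosure_singleton_subset hsub⟩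
  · intro H f hf
    choose U hUfin hUeq using hf
    obtain ⟨i, j, hij, hdom⟩ := WellQuasiOrdered.exists_lt_forall_exists_rel_of_finite H U hUfin
    refine ⟨i, j, hij, ?_⟩
    rw [hUeq i, hUeq j]
    exact downClosure_subset_downClosure hdom
end

section
/- In a well quasi order, every downward closed set is a finite union of ideals. -/
/-- An ideal: a non-empty, downward closed, directed subset. -/
def IsIdeal {X : Type*} (r : X → X → Prop) (Z : Set X) : Prop :=
  Z.Nonempty ∧ (∀ ⦃x y⦄, x ∈ Z → r y x → y ∈ Z) ∧
    ∀ z ∈ Z, ∀ z' ∈ Z, ∃ z'' ∈ Z, r z z'' ∧ r z' z''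

/-- In a wqo, every downward closed set is a finite union of ideals. -/
theorem downwardClosed_eq_finite_union_of_ideals
    {X : Type*} (r : X → X → Prop)
    (hrefl : Reflexive r) (htrans : Transitive r)
    (hwqo : ∀ f : ℕ → X, ∃ i j : ℕ, i < j ∧ r (f i) (f j))
    (D : Set X) (hD : ∀ ⦃x y⦄, x ∈ D → r y x → y ∈ D) :
    ∃ F : Set (Set X), F.Finite ∧ (∀ Z ∈ F, IsIdeal r Z) ∧ D = ⋃₀ F := by
  classical
  by_contra h
  set S : Set (Set X) := {A | (∀ ⦃x y⦄, x ∈ A → r y x → y ∈ A) ∧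
      ¬ ∃ F : Set (Set X), F.Finite ∧ (∀ Z ∈ F, IsIdeal r Z) ∧ A = ⋃₀ F} with hSdef
  have hDS : D ∈ S := ⟨hD, h⟩
  -- There is a ⊂-minimal element of S.
  have hmin : ∃ A ∈ S, ∀ B ∈ S, ¬ B ⊂ A := by
    by_contra hno
    push_neg at hno
    choose g hgS hgsub using hno
    let f : ℕ → {A // A ∈ S} := fun n =>
      Nat.rec ⟨D, hDS⟩ (fun _ p => ⟨g p.1 p.2, hgS p.1 p.2⟩) n
    have hstep : ∀ n, (f (n + 1)).1 ⊂ (f n).1 := fun n => hgsub _ _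
    have hx : ∀ n, ∃ x, x ∈ (f n).1 ∧ x ∉ (f (n + 1)).1 := fun n =>
      Set.exists_of_ssubset (hstep n)
    choose x hx1 hx2 using hx
    have hmono : ∀ i j, i ≤ j → (f j).1 ⊆ (f i).1 := by
      intro i j hij
      induction j, hij using Nat.le_induction with
      | base => exact subset_rfl
      | succ k hk ih => exact (hstep k).subset.trans ih
    obtain ⟨i, j, hij, hr⟩ := hwqo x
    have hji : (f j).1 ⊆ (f (i + 1)).1 := hmono _ _ hij
    exact hx2 i ((f (i + 1)).2.1 (hji (hx1 j)) hr)
  obtain ⟨A, ⟨hAdc, hAnot⟩, hAmin⟩ := hmin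
  apply hAnot
  by_cases hne : A.Nonempty
  · have hnotdir : ¬ ∀ z ∈ A, ∀ z' ∈ A, ∃ z'' ∈ A, r z z'' ∧ r z' z'' := by
      intro hdir
      exact hAnot ⟨{A}, Set.finite_singleton _,
        (by rintro Z rfl; exact ⟨hne, hAdc, hdir⟩ : ∀ Z ∈ ({A} : Set (Set X)), IsIdeal r Z),
        by simp⟩
    push_neg at hnotdir
    obtain ⟨a, ha, b, hb, hub⟩ := hnotdir
    set Da : Set X := {x ∈ A | ¬ r a x} with hDa
    set Db : Set X := {x ∈ A | ¬ r b x} with hDb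
    have hDadc : ∀ ⦃x y⦄, x ∈ Da → r y x → y ∈ Da :=
      fun x y hx hyx => ⟨hAdc hx.1 hyx, fun hay => hx.2 (htrans hay hyx)⟩
    have hDbdc : ∀ ⦃x y⦄, x ∈ Db → r y x → y ∈ Db :=
      fun x y hx hyx => ⟨hAdc hx.1 hyx, fun hby => hx.2 (htrans hby hyx)⟩
    have hDass : Da ⊂ A := ⟨Set.sep_subset _ _, fun hsub => (hsub ha).2 (hrefl a)⟩
    have hDbss : Db ⊂ A := ⟨Set.sep_subset _ _, fun hsub => (hsub hb).2 (hrefl b)⟩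
    have hFa : ∃ F : Set (Set X), F.Finite ∧ (∀ Z ∈ F, IsIdeal r Z) ∧ Da = ⋃₀ F := by
      by_contra hF; exact hAmin Da ⟨hDadc, hF⟩ hDass
    have hFb : ∃ F : Set (Set X), F.Finite ∧ (∀ Z ∈ F, IsIdeal r Z) ∧ Db = ⋃₀ F := by
      by_contra hF; exact hAmin Db ⟨hDbdc, hF⟩ hDbss
    obtain ⟨Fa, hFa1, hFa2, hFa3⟩ := hFa
    obtain ⟨Fb, hFb1, hFb2, hFb3⟩ := hFb
    refine ⟨Fa ∪ Fb, hFa1.union hFb1,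
      fun Z hZ => hZ.elim (hFa2 Z) (hFb2 Z), ?_⟩
    rw [Set.sUnion_union, ← hFa3, ← hFb3]
    ext x
    constructor
    · intro hxA
      by_cases hax : r a x
      · by_cases hbx : r b x
        · exact absurd (⟨hax, hbx⟩ : r a x ∧ r b x) (by have := hub x hxA; tauto)
        · exact Or.inr ⟨hxA, hbx⟩
      · exact Or.inl ⟨hxA, hax⟩
    · rintro (hx | hx)
      · exact hx.1
      · exact hx.1
  · exact ⟨∅, Set.finite_empty, by simp,
      by simp [Set.not_nonempty_iff_eq_empty.mp hne]⟩
end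

section
/- Let W be an upward-compatible labeled transition system with initial configurations I and an upward-closed set of final configurations F. Then the language of W is empty if and only if there exists an inductive invariant for W, i.e., a downward-closed set X of configurations with I ⊆ X, F ∩ X = ∅, and such that X is closed under the transition relation (every a-successor of an element of X is in X). -/
/-- `Reaches T s w t`: configuration `s` reaches `t` along the word `w`. -/
inductive Reaches {S A : Type*} (T : S → A → S → Prop) : S → List A → S → Prop where
  | nil (s : S) : Reaches T s [] s
  | cons {s r t : S} {a : A} {w : List A} :
      T s a r → Reaches T r w t → Reaches T s (a :: w) t

lemma Reaches.lift {S A : Type*} {T : S → A → S → Prop} {pre : S → S → Prop}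
    (hcompat : ∀ ⦃s s' r : S⦄ ⦃a : A⦄, pre s s' → T s a r →
      ∃ r', T s' a r' ∧ pre r r')
    {s t : S} {w : List A} (h : Reaches T s w t) :
    ∀ s', pre s s' → ∃ t', Reaches T s' w t' ∧ pre t t' := by
  induction h with
  | nil s => exact fun s' hp => ⟨s', Reaches.nil s', hp⟩
  | cons hT _ ih =>
    intro s' hp
    obtain ⟨r', hT', hpr⟩ := hcompat hp hT
    obtain ⟨t', hR, hpt⟩ := ih r' hpr
    exact ⟨t', Reaches.cons hT' hR, hpt⟩

/-- For an upward-compatible LTS with upward-closed final set, the language is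
empty iff there exists an inductive invariant. -/
theorem language_empty_iff_inductive_invariant
    {S A : Type*} (T : S → A → S → Prop) (pre : S → S → Prop)
    (I F : Set S)
    (hrefl : Reflexive pre) (htrans : Transitive pre)
    (hcompat : ∀ ⦃s s' r : S⦄ ⦃a : A⦄, pre s s' → T s a r →
      ∃ r', T s' a r' ∧ pre r r')
    (hFup : ∀ ⦃f f'⦄, f ∈ F → pre f f' → f' ∈ F) :
    (¬ ∃ w : List A, ∃ i ∈ I, ∃ f ∈ F, Reaches T i w f) ↔
      ∃ X : Set S,
        (∀ ⦃x y⦄, x ∈ X → pre y x → y ∈ X) ∧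
        I ⊆ X ∧
        F ∩ X = ∅ ∧
        (∀ (a : A) (s s' : S), s ∈ X → T s a s' → s' ∈ X) := by
  constructor
  · intro hemp
    refine ⟨{s | ¬ ∃ w : List A, ∃ f ∈ F, Reaches T s w f}, ?_, ?_, ?_, ?_⟩
    · intro x y hx hpre ⟨w, f, hf, hR⟩
      obtain ⟨f', hR', hpf⟩ := Reaches.lift hcompat hR x hpre
      exact hx ⟨w, f', hFup hf hpf, hR'⟩
    · intro i hi ⟨w, f, hf, hR⟩
      exact hemp ⟨w, i, hi, f, hf, hR⟩
    · ext f
      simp only [Set.mem_inter_iff, Set.mem_empty_iff_false, iff_false]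
      rintro ⟨hf, hX⟩
      exact hX ⟨[], f, hf, Reaches.nil f⟩
    · intro a s s' hs hT ⟨w, f, hf, hR⟩
      exact hs ⟨a :: w, f, hf, Reaches.cons hT hR⟩
  · rintro ⟨X, _, hIX, hFX, hsucc⟩ ⟨w, i, hi, f, hf, hR⟩
    have : ∀ {s t : S} {w : List A}, Reaches T s w t → s ∈ X → t ∈ X := by
      intro s t w h
      induction h with
      | nil => exact id
      | cons hT _ ih => exact fun hs => ih (hsucc _ _ _ hs hT)
    have hfX : f ∈ X := this hR (hIX hi)
    exact Set.eq_empty_iff_forall_notMem.mp hFX f ⟨hf, hfX⟩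
end

section
/- Let X be an inductive invariant of a UWSTS W with state wqo (S, ≼). Then the downward closure (with respect to ideal inclusion) of the set of inclusion-maximal ideals contained in X is a finitely-represented inductive invariant of the ideal completion of W; in particular, X is the union of its inclusion-maximal ideals, and that set of maximal ideals is finite. -/
/-- An inclusion-maximal ideal of a set `W`. -/
def MaxIdealOf {X : Type*} (r : X → X → Prop) (Z W : Set X) : Prop :=
  IsIdeal r Z ∧ Z ⊆ W ∧ ∀ Z' : Set X, IsIdeal r Z' → Z' ⊆ W → Z ⊆ Z' → Z' = Z

/-- The set of `a`-successors of `Y`. -/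
def Succ {S A : Type*} (T : S → A → S → Prop) (a : A) (Y : Set S) : Set S :=
  {t | ∃ s ∈ Y, T s a t}

open Set

section Ideals

variable {S : Type*} {r : S → S → Prop}

def IsDownClosed (r : S → S → Prop) (D : Set S) : Prop :=
  ∀ ⦃x y⦄, x ∈ D → r y x → y ∈ D

lemma IsIdeal.isDownClosed {Y : Set S} (hY : IsIdeal r Y) : IsDownClosed r Y :=
  hY.2.1

lemma IsDownClosed.downClosure_subset {D U : Set S} (hD : IsDownClosed r D) (hU : U ⊆ D) :
    downClosure r U ⊆ D :=
  fun _ ⟨_, hu, hxu⟩ => hD (hU hu) hxu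

lemma IsDownClosed.sep_not_rel [IsTrans S r] {D : Set S} (hD : IsDownClosed r D)
    (a : S) : IsDownClosed r {x ∈ D | ¬ r a x} :=
  fun _ _ ⟨hxD, hax⟩ hyx => ⟨hD hxD hyx, fun hay => hax (trans_of r hay hyx)⟩

lemma isIdeal_setOf_rel [IsPreorder S r] (x : S) :
    IsIdeal r {y | r y x} :=
  ⟨⟨x, refl_of r x⟩, fun _ _ hu hvu => trans_of r hvu hu,
    fun _ hz _ hz' => ⟨x, refl_of r x, hz, hz'⟩⟩

lemma IsIdeal.exists_upperBound_of_finite [IsTrans S r] {Y : Set S}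
    (hY : IsIdeal r Y) {T : Set S} (hT : T.Finite) (hTY : T ⊆ Y) :
    ∃ u ∈ Y, ∀ t ∈ T, r t u := by
  induction T, hT using Set.Finite.induction_on with
  | empty =>
    obtain ⟨u, hu⟩ := hY.1
    exact ⟨u, hu, by simp⟩
  | @insert a T _ _ ih =>
    obtain ⟨u, huY, hu⟩ := ih ((subset_insert a T).trans hTY)
    obtain ⟨v, hvY, hav, huv⟩ := hY.2.2 a (hTY (mem_insert a T)) u huY
    refine ⟨v, hvY, ?_⟩
    rintro t (rfl | ht)
    · exact hav
    · exact trans_of r (hu t ht) huv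

lemma IsIdeal.exists_subset_of_subset_sUnion [IsTrans S r] {Y : Set S}
    (hY : IsIdeal r Y) {𝒥 : Set (Set S)} (h𝒥 : 𝒥.Finite)
    (hdown : ∀ J ∈ 𝒥, IsDownClosed r J) (hY𝒥 : Y ⊆ ⋃₀ 𝒥) : ∃ J ∈ 𝒥, Y ⊆ J := by
  by_contra! hnot
  choose y hyY hyJ using fun J : 𝒥 => not_subset.mp (hnot J J.2)
  have : Finite 𝒥 := h𝒥.to_subtype
  obtain ⟨u, huY, hu⟩ :=
    hY.exists_upperBound_of_finite (finite_range y) (range_subset_iff.mpr hyY)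
  obtain ⟨J, hJ, huJ⟩ := hY𝒥 huY
  exact hyJ ⟨J, hJ⟩ (hdown J hJ huJ (hu _ (mem_range_self _)))

lemma wellFoundedOn_ssubset_of_wellQuasiOrdered (hwqo : WellQuasiOrdered r) :
    {D : Set S | IsDownClosed r D}.WellFoundedOn (· ⊂ ·) := by
  rw [wellFoundedOn_iff, wellFounded_iff_isEmpty_descending_chain]
  refine ⟨fun ⟨D, hD⟩ => ?_⟩
  have hanti : Antitone D := antitone_nat_of_succ_le fun n => (hD n).1.subset
  choose x hx hx' using fun n => exists_of_ssubset (hD n).1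
  obtain ⟨i, j, hij, hxij⟩ := hwqo x
  exact hx' i ((hD i).2.1 (hanti (Nat.succ_le_of_lt hij) (hx j)) hxij)

structure IsIdealDecomposition (r : S → S → Prop) (𝒥 : Set (Set S)) (D : Set S) : Prop where
  finite : 𝒥.Finite
  isIdeal : ∀ J ∈ 𝒥, IsIdeal r J
  sUnion_eq : ⋃₀ 𝒥 = D

namespace IsIdealDecomposition

variable {𝒥 𝒥' : Set (Set S)} {D D' X : Set S}

lemma subset (h : IsIdealDecomposition r 𝒥 D) {J : Set S} (hJ : J ∈ 𝒥) : J ⊆ D :=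
  h.sUnion_eq ▸ subset_sUnion_of_mem hJ

lemma union (h : IsIdealDecomposition r 𝒥 D) (h' : IsIdealDecomposition r 𝒥' D') :
    IsIdealDecomposition r (𝒥 ∪ 𝒥') (D ∪ D') :=
  ⟨h.finite.union h'.finite, fun J hJ => hJ.elim (h.isIdeal J) (h'.isIdeal J),
    by rw [sUnion_union, h.sUnion_eq, h'.sUnion_eq]⟩

lemma exists_subset_of_isIdeal [IsTrans S r] (h : IsIdealDecomposition r 𝒥 X) {Y : Set S}
    (hY : IsIdeal r Y) (hYX : Y ⊆ X) : ∃ J ∈ 𝒥, Y ⊆ J :=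
  hY.exists_subset_of_subset_sUnion h.finite (fun J hJ => (h.isIdeal J hJ).isDownClosed)
    (h.sUnion_eq ▸ hYX)

lemma setOf_maxIdealOf_subset [IsTrans S r] (h : IsIdealDecomposition r 𝒥 X) :
    {Y | MaxIdealOf r Y X} ⊆ 𝒥 := by
  rintro Y ⟨hY, hYX, hmax⟩
  obtain ⟨J, hJ, hYJ⟩ := h.exists_subset_of_isIdeal hY hYX
  exact hmax J (h.isIdeal J hJ) (h.subset hJ) hYJ ▸ hJ

lemma exists_maxIdealOf_superset [IsTrans S r] (h : IsIdealDecomposition r 𝒥 X) {Y : Set S}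
    (hY : IsIdeal r Y) (hYX : Y ⊆ X) : ∃ Z, MaxIdealOf r Z X ∧ Y ⊆ Z := by
  obtain ⟨J₀, hJ₀, hYJ₀⟩ := h.exists_subset_of_isIdeal hY hYX
  obtain ⟨J, ⟨hJ, hYJ⟩, hmax⟩ :=
    h.finite.subset (sep_subset 𝒥 (Y ⊆ ·)) |>.exists_maximalFor id _ ⟨J₀, hJ₀, hYJ₀⟩
  refine ⟨J, ⟨h.isIdeal J hJ, h.subset hJ, fun Z hZ hZX hJZ => ?_⟩, hYJ⟩
  obtain ⟨J₁, hJ₁, hZJ₁⟩ := h.exists_subset_of_isIdeal hZ hZX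
  have hJJ₁ : J ⊆ J₁ := hJZ.trans hZJ₁
  exact (hZJ₁.trans (hmax ⟨hJ₁, hYJ.trans hJJ₁⟩ hJJ₁)).antisymm hJZ

end IsIdealDecomposition

lemma IsDownClosed.exists_isIdealDecomposition [IsPreorder S r] (hwqo : WellQuasiOrdered r)
    {D : Set S} (hD : IsDownClosed r D) : ∃ 𝒥, IsIdealDecomposition r 𝒥 D := by
  refine (wellFoundedOn_ssubset_of_wellQuasiOrdered hwqo).induction hD
    (P := fun D => ∃ 𝒥, IsIdealDecomposition r 𝒥 D) fun D hD ih => ?_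
  rcases D.eq_empty_or_nonempty with rfl | hne
  · exact ⟨∅, finite_empty, by simp, sUnion_empty⟩
  by_cases hdir : ∀ a ∈ D, ∀ b ∈ D, ∃ c ∈ D, r a c ∧ r b c
  · exact ⟨{D}, finite_singleton D, by rintro J rfl; exact ⟨hne, hD, hdir⟩, sUnion_singleton D⟩
  push Not at hdir
  obtain ⟨a, ha, b, hb, hab⟩ := hdir
  have decompose_not_above (c : S) (hc : c ∈ D) :
      ∃ 𝒥, IsIdealDecomposition r 𝒥 {x ∈ D | ¬ r c x} :=
    ih _ (hD.sep_not_rel c)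
      ((ssubset_iff_of_subset (sep_subset _ _)).mpr ⟨c, hc, fun h => h.2 (refl_of r c)⟩)
  obtain ⟨𝒥a, h𝒥a⟩ := decompose_not_above a ha
  obtain ⟨𝒥b, h𝒥b⟩ := decompose_not_above b hb
  have hsplit : {x ∈ D | ¬ r a x} ∪ {x ∈ D | ¬ r b x} = D := by
    rw [← sep_or]
    exact sep_eq_self_iff_mem_true.mpr fun x hx => not_and_or.mp fun h => hab x hx h.1 h.2
  exact ⟨𝒥a ∪ 𝒥b, hsplit ▸ h𝒥a.union h𝒥b⟩

lemma IsDownClosed.finite_setOf_maxIdealOf [IsPreorder S r]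
    (hwqo : WellQuasiOrdered r) {X : Set S} (hX : IsDownClosed r X) :
    {Y | MaxIdealOf r Y X}.Finite :=
  let ⟨_, h𝒥⟩ := hX.exists_isIdealDecomposition hwqo
  h𝒥.finite.subset h𝒥.setOf_maxIdealOf_subset

lemma IsDownClosed.exists_maxIdealOf_superset [IsPreorder S r]
    (hwqo : WellQuasiOrdered r) {X : Set S} (hX : IsDownClosed r X) {Y : Set S}
    (hY : IsIdeal r Y) (hYX : Y ⊆ X) : ∃ Z, MaxIdealOf r Z X ∧ Y ⊆ Z :=
  let ⟨_, h𝒥⟩ := hX.exists_isIdealDecomposition hwqo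
  h𝒥.exists_maxIdealOf_superset hY hYX

lemma IsDownClosed.eq_sUnion_setOf_maxIdealOf [IsPreorder S r]
    (hwqo : WellQuasiOrdered r) {X : Set S} (hX : IsDownClosed r X) :
    X = ⋃₀ {Y | MaxIdealOf r Y X} := by
  refine subset_antisymm (fun x hx => ?_) (sUnion_subset fun Y hY => hY.2.1)
  obtain ⟨Z, hZ, hxZ⟩ :=
    hX.exists_maxIdealOf_superset hwqo (isIdeal_setOf_rel x) fun _ hy => hX hx hy
  exact ⟨Z, hZ, hxZ (refl_of r x)⟩

end Ideals

theorem inducedInvariant_ideal_completion_general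
    {S A : Type*} (T : S → A → S → Prop) (pre : S → S → Prop)
    (I F : Set S)
    (hrefl : Reflexive pre) (htrans : Transitive pre)
    (hwqo : ∀ f : ℕ → S, ∃ i j : ℕ, i < j ∧ pre (f i) (f j))
    (X : Set S)
    (hXdown : ∀ ⦃x y⦄, x ∈ X → pre y x → y ∈ X)
    (hXI : I ⊆ X) (hXF : F ∩ X = ∅)
    (hXsucc : ∀ (a : A), Succ T a X ⊆ X) :
    -- the set of inclusion-maximal ideals of `X` is finite
    {Y : Set S | MaxIdealOf pre Y X}.Finite ∧
    -- `X` is the union of its inclusion-maximal ideals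
    X = ⋃₀ {Y : Set S | MaxIdealOf pre Y X} ∧
    -- its downward closure w.r.t. inclusion among ideals is an inductive
    -- invariant of the ideal completion:
    -- (initial) every initial ideal is in the invariant
    (∀ Y : Set S, MaxIdealOf pre Y (downClosure pre I) →
      IsIdeal pre Y ∧ ∃ Z, MaxIdealOf pre Z X ∧ Y ⊆ Z) ∧
    -- (final) no ideal in the invariant meets `F`
    (∀ Y : Set S, (IsIdeal pre Y ∧ ∃ Z, MaxIdealOf pre Z X ∧ Y ⊆ Z) →
      Y ∩ F = ∅) ∧
    -- (successors) the invariant is closed under the transition relation of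
    -- the ideal completion
    (∀ (a : A) (Y Z : Set S),
      (IsIdeal pre Y ∧ ∃ Z', MaxIdealOf pre Z' X ∧ Y ⊆ Z') →
      MaxIdealOf pre Z (downClosure pre (Succ T a Y)) →
      IsIdeal pre Z ∧ ∃ Z', MaxIdealOf pre Z' X ∧ Z ⊆ Z') := by
  have : IsPreorder S pre := { refl := hrefl, trans := fun _ _ _ => @htrans _ _ _ }
  have hX : IsDownClosed pre X := hXdown
  have extend : ∀ Y, IsIdeal pre Y → Y ⊆ X → IsIdeal pre Y ∧ ∃ Z, MaxIdealOf pre Z X ∧ Y ⊆ Z :=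
    fun Y hY hYX => ⟨hY, hX.exists_maxIdealOf_superset hwqo hY hYX⟩
  refine ⟨hX.finite_setOf_maxIdealOf hwqo,
    hX.eq_sUnion_setOf_maxIdealOf hwqo,
    fun Y hY => extend Y hY.1 (hY.2.1.trans (hX.downClosure_subset hXI)), ?_, ?_⟩
  · rintro Y ⟨-, Z, hZ, hYZ⟩
    exact subset_empty_iff.mp fun y ⟨hyY, hyF⟩ => hXF.subset ⟨hyF, hZ.2.1 (hYZ hyY)⟩
  · rintro a Y Z ⟨-, Z', hZ', hYZ'⟩ hZ
    have hSuccY : Succ T a Y ⊆ X :=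
      fun t ⟨s, hs, hst⟩ => hXsucc a ⟨s, hZ'.2.1 (hYZ' hs), hst⟩
    exact extend Z hZ.1 (hZ.2.1.trans (hX.downClosure_subset hSuccY))

/-- An inductive invariant `X` of a UWSTS induces a finitely-represented
inductive invariant of the ideal completion, namely the downward closure
(w.r.t. inclusion) of the finitely many inclusion-maximal ideals of `X`;
moreover `X` is the union of those maximal ideals. -/
theorem inducedInvariant_ideal_completion
    {S A : Type*} (T : S → A → S → Prop) (pre : S → S → Prop)
    (I F : Set S)
    (hrefl : Reflexive pre) (htrans : Transitive pre)
    (hwqo : ∀ f : ℕ → S, ∃ i j : ℕ, i < j ∧ pre (f i) (f j))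
    (hcompat : ∀ ⦃s s' r : S⦄ ⦃a : A⦄, pre s s' → T s a r →
      ∃ r', T s' a r' ∧ pre r r')
    (hFup : ∀ ⦃f f'⦄, f ∈ F → pre f f' → f' ∈ F)
    (X : Set S)
    (hXdown : ∀ ⦃x y⦄, x ∈ X → pre y x → y ∈ X)
    (hXI : I ⊆ X) (hXF : F ∩ X = ∅)
    (hXsucc : ∀ (a : A), Succ T a X ⊆ X) :
    -- the set of inclusion-maximal ideals of `X` is finite
    {Y : Set S | MaxIdealOf pre Y X}.Finite ∧
    -- `X` is the union of its inclusion-maximal ideals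
    X = ⋃₀ {Y : Set S | MaxIdealOf pre Y X} ∧
    -- its downward closure w.r.t. inclusion among ideals is an inductive
    -- invariant of the ideal completion:
    -- (initial) every initial ideal is in the invariant
    (∀ Y : Set S, MaxIdealOf pre Y (downClosure pre I) →
      IsIdeal pre Y ∧ ∃ Z, MaxIdealOf pre Z X ∧ Y ⊆ Z) ∧
    -- (final) no ideal in the invariant meets `F`
    (∀ Y : Set S, (IsIdeal pre Y ∧ ∃ Z, MaxIdealOf pre Z X ∧ Y ⊆ Z) →
      Y ∩ F = ∅) ∧
    -- (successors) the invariant is closed under the transition relation of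
    -- the ideal completion
    (∀ (a : A) (Y Z : Set S),
      (IsIdeal pre Y ∧ ∃ Z', MaxIdealOf pre Z' X ∧ Y ⊆ Z') →
      MaxIdealOf pre Z (downClosure pre (Succ T a Y)) →
      IsIdeal pre Z ∧ ∃ Z', MaxIdealOf pre Z' X ∧ Z ⊆ Z') :=
  inducedInvariant_ideal_completion_general T pre I F hrefl htrans hwqo X hXdown hXI hXF hXsucc
end

section
/- Let W and W' be upward-compatible LTS over the same alphabet with W' deterministic, such that their languages are disjoint, and suppose the synchronized product W × W' admits an inductive invariant of the form ↓Q for a finite set Q of product configurations. Then the finite automaton A with state set Q — where a state (s,s') is initial if it dominates some initial configuration of W × W' in the product order, final if its W-component is final in W, and with transitions (s,s') →ᵃ (r,r') whenever (s,s') →ᵃ (t,t') in W × W' for some (t,t') below (r,r') in the product order — satisfies L(W) ⊆ L(A) and L(A) ∩ L(W') = ∅. -/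
/-- The language of an LTS. -/
def language {S A : Type*} (T : S → A → S → Prop) (I F : Set S) : Set (List A) :=
  {w | ∃ i ∈ I, ∃ f ∈ F, Reaches T i w f}

lemma reaches_det_unique {S A : Type*} {T : S → A → S → Prop}
    (hdet : ∀ (s : S) (a : A), ∃! s' : S, T s a s')
    {s w t t'} (h : Reaches T s w t) (h' : Reaches T s w t') : t = t' := by
  induction h generalizing t' with
  | nil s => cases h'; rfl
  | @cons s m t a w hs _ ih =>
    cases h' with
    | @cons _ m' _ _ _ hs' hr' =>
      obtain ⟨u, _, hu⟩ := hdet s a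
      have e : m' = m := (hu _ hs').trans (hu _ hs).symm
      exact ih (e ▸ hr')

/-- Turning a finitely-represented inductive invariant of the product of two
disjoint ULTS (the second deterministic) into a regular separator: the finite
automaton induced by the finite set `Q` contains the language of `W` and is
disjoint from the language of `W'`. -/
theorem separating_automaton_from_invariant
    {S S' A : Type*}
    -- the ULTS `W`
    (T : S → A → S → Prop) (pre : S → S → Prop) (I F : Set S)
    (hrefl : Reflexive pre) (htrans : Transitive pre)
    (hcompat : ∀ ⦃s s' r : S⦄ ⦃a : A⦄, pre s s' → T s a r →
      ∃ r', T s' a r' ∧ pre r r')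
    (hFup : ∀ ⦃f f'⦄, f ∈ F → pre f f' → f' ∈ F)
    -- the deterministic ULTS `W'`
    (T' : S' → A → S' → Prop) (pre' : S' → S' → Prop) (I' F' : Set S')
    (hrefl' : Reflexive pre') (htrans' : Transitive pre')
    (hcompat' : ∀ ⦃s s' r : S'⦄ ⦃a : A⦄, pre' s s' → T' s a r →
      ∃ r', T' s' a r' ∧ pre' r r')
    (hFup' : ∀ ⦃f f'⦄, f ∈ F' → pre' f f' → f' ∈ F')
    (hdetI : ∃ i₀ : S', I' = {i₀})
    (hdetT : ∀ (s : S') (a : A), ∃! s' : S', T' s a s')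
    -- disjointness of the languages
    (hdisj : language T I F ∩ language T' I' F' = ∅)
    -- a finite set `Q` whose downward closure (w.r.t. the product order) is an
    -- inductive invariant of the synchronized product
    (Q : Set (S × S')) (hQfin : Q.Finite)
    (hQI : ∀ p : S × S', p.1 ∈ I → p.2 ∈ I' →
      ∃ q ∈ Q, pre p.1 q.1 ∧ pre' p.2 q.2)
    (hQF : ∀ q : S × S', (∃ q' ∈ Q, pre q.1 q'.1 ∧ pre' q.2 q'.2) →
      ¬ (q.1 ∈ F ∧ q.2 ∈ F'))
    (hQsucc : ∀ (a : A) (p t : S × S'),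
      (∃ q ∈ Q, pre p.1 q.1 ∧ pre' p.2 q.2) →
      (T p.1 a t.1 ∧ T' p.2 a t.2) →
      ∃ q ∈ Q, pre t.1 q.1 ∧ pre' t.2 q.2) :
    -- the separating automaton `A` with states `Q`
    language
        -- transitions: over-approximation of the product transitions
        (fun (p : S × S') (a : A) (q : S × S') =>
          p ∈ Q ∧ q ∈ Q ∧
            ∃ t : S × S', (T p.1 a t.1 ∧ T' p.2 a t.2) ∧
              pre t.1 q.1 ∧ pre' t.2 q.2)
        -- initial states: those dominating some initial product configuration
        {q | q ∈ Q ∧ ∃ i : S × S', i.1 ∈ I ∧ i.2 ∈ I' ∧ pre i.1 q.1 ∧ pre' i.2 q.2}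
        -- final states: those whose `W`-component is final
        {q | q ∈ Q ∧ q.1 ∈ F} ⊇ language T I F ∧
    language
        (fun (p : S × S') (a : A) (q : S × S') =>
          p ∈ Q ∧ q ∈ Q ∧
            ∃ t : S × S', (T p.1 a t.1 ∧ T' p.2 a t.2) ∧
              pre t.1 q.1 ∧ pre' t.2 q.2)
        {q | q ∈ Q ∧ ∃ i : S × S', i.1 ∈ I ∧ i.2 ∈ I' ∧ pre i.1 q.1 ∧ pre' i.2 q.2}
        {q | q ∈ Q ∧ q.1 ∈ F} ∩ language T' I' F' = ∅ := by
  set TA : S × S' → A → S × S' → Prop := fun p a q =>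
    p ∈ Q ∧ q ∈ Q ∧ ∃ t : S × S', (T p.1 a t.1 ∧ T' p.2 a t.2) ∧
      pre t.1 q.1 ∧ pre' t.2 q.2 with hTA
  -- key lemma 1: lift a run of W to a run of the automaton
  have key1 : ∀ {s : S} {w : List A} {f : S}, Reaches T s w f →
      ∀ (s' : S') (q : S × S'), q ∈ Q → pre s q.1 → pre' s' q.2 →
      ∃ r, Reaches TA q w r ∧ r ∈ Q ∧ pre f r.1 := by
    intro s w f h
    induction h with
    | nil s => intro s' q hq h1 _; exact ⟨q, Reaches.nil q, hq, h1⟩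
    | @cons s m f a w hs hr ih =>
      intro s' q hq h1 h2
      obtain ⟨t', ht', _⟩ := hdetT s' a
      obtain ⟨u1, hu1, hmu1⟩ := hcompat h1 hs
      obtain ⟨u2, hu2, htu2⟩ := hcompat' h2 ht'
      obtain ⟨r, hrQ, hr1, hr2⟩ := hQsucc a q (u1, u2)
        ⟨q, hq, hrefl _, hrefl' _⟩ ⟨hu1, hu2⟩
      obtain ⟨z, hz, hzQ, hzf⟩ := ih t' r hrQ (htrans hmu1 hr1) (htrans' htu2 hr2)
      exact ⟨z, Reaches.cons ⟨hq, hrQ, (u1, u2), ⟨hu1, hu2⟩, hr1, hr2⟩ hz, hzQ, hzf⟩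
  -- key lemma 2: track the W' run along an automaton run
  have key2 : ∀ {q : S × S'} {w : List A} {r : S × S'}, Reaches TA q w r →
      ∀ s' : S', pre' s' q.2 →
      ∃ f', Reaches T' s' w f' ∧ pre' f' r.2 := by
    intro q w r h
    induction h with
    | nil q => intro s' h2; exact ⟨s', Reaches.nil s', h2⟩
    | @cons q p r a w hq hr ih =>
      intro s' h2
      obtain ⟨hqQ, hpQ, t, ⟨ht1, ht2⟩, htp1, htp2⟩ := hq
      obtain ⟨m', hm', _⟩ := hdetT s' a
      obtain ⟨r'', hr'', hmr''⟩ := hcompat' h2 hm'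
      obtain ⟨u, _, hu⟩ := hdetT q.2 a
      have : r'' = t.2 := by rw [hu _ hr'', hu _ ht2]
      subst this
      obtain ⟨f', hf', hfr⟩ := ih m' (htrans' hmr'' htp2)
      exact ⟨f', Reaches.cons hm' hf', hfr⟩
  constructor
  · intro w hw
    obtain ⟨i, hi, f, hf, hrun⟩ := hw
    obtain ⟨i₀, hI'⟩ := hdetI
    have hi₀ : i₀ ∈ I' := by rw [hI']; rfl
    obtain ⟨q, hqQ, hq1, hq2⟩ := hQI (i, i₀) hi hi₀
    obtain ⟨r, hrr, hrQ, hrf⟩ := key1 hrun i₀ q hqQ hq1 hq2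
    exact ⟨q, ⟨hqQ, (i, i₀), hi, hi₀, hq1, hq2⟩, r, ⟨hrQ, hFup hf hrf⟩, hrr⟩
  · ext w
    simp only [Set.mem_inter_iff, Set.mem_empty_iff_false, iff_false]
    rintro ⟨⟨q, ⟨hqQ, i, hi1, hi2, hpi1, hpi2⟩, r, ⟨hrQ, hrF⟩, hrun⟩,
      ⟨i', hi', f', hf', hrun'⟩⟩
    obtain ⟨i₀, hI'⟩ := hdetI
    have e1 : i.2 = i₀ := by rw [hI'] at hi2; exact hi2
    have e2 : i' = i₀ := by rw [hI'] at hi'; exact hi'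
    obtain ⟨f'', hf'', hfr⟩ := key2 hrun i.2 hpi2
    have : f'' = f' := reaches_det_unique hdetT hf'' (e1 ▸ e2 ▸ hrun')
    subst this
    exact hQF r ⟨r, hrQ, hrefl _, hrefl' _⟩ ⟨hrF, hFup' hf' hfr⟩
end

section
/- Let W and W' be UWSTS over the same alphabet. The synchronized product of their ideal completions is isomorphic (as a quasi-ordered labeled transition system) to the ideal completion of their synchronized product, via the map sending a pair of ideals (I, J) to the product ideal I × J. -/
section Helpers

variable {X X' : Type*} {r : X → X → Prop} {r' : X' → X' → Prop}

/-- The product quasi-order. -/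
abbrev rProd (r : X → X → Prop) (r' : X' → X' → Prop) : X × X' → X × X' → Prop :=
  fun p q => r p.1 q.1 ∧ r' p.2 q.2

lemma isIdeal_prod {A : Set X} {B : Set X'} (hA : IsIdeal r A) (hB : IsIdeal r' B) :
    IsIdeal (rProd r r') (A ×ˢ B) := by
  obtain ⟨⟨a, ha⟩, hdA, hdirA⟩ := hA
  obtain ⟨⟨b, hb⟩, hdB, hdirB⟩ := hB
  refine ⟨⟨(a, b), ha, hb⟩, ?_, ?_⟩
  · rintro ⟨x, y⟩ ⟨u, v⟩ ⟨hx, hy⟩ ⟨h1, h2⟩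
    exact ⟨hdA hx h1, hdB hy h2⟩
  · rintro ⟨x, y⟩ ⟨hx, hy⟩ ⟨x', y'⟩ ⟨hx', hy'⟩
    obtain ⟨u, hu, h1, h2⟩ := hdirA x hx x' hx'
    obtain ⟨v, hv, h3, h4⟩ := hdirB y hy y' hy'
    exact ⟨(u, v), ⟨hu, hv⟩, ⟨h1, h3⟩, ⟨h2, h4⟩⟩

lemma ideal_decomp (hrefl : Reflexive r) (hrefl' : Reflexive r')
    {Z : Set (X × X')} (hZ : IsIdeal (rProd r r') Z) :
    IsIdeal r (Prod.fst '' Z) ∧ IsIdeal r' (Prod.snd '' Z) ∧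
      Z = (Prod.fst '' Z) ×ˢ (Prod.snd '' Z) := by
  obtain ⟨⟨z, hz⟩, hd, hdir⟩ := hZ
  refine ⟨⟨⟨z.1, z, hz, rfl⟩, ?_, ?_⟩, ⟨⟨z.2, z, hz, rfl⟩, ?_, ?_⟩, ?_⟩
  · rintro x y ⟨⟨x1, x2⟩, hxm, rfl⟩ hyx
    exact ⟨(y, x2), hd hxm ⟨hyx, hrefl' x2⟩, rfl⟩
  · rintro x hx x' hx'
    obtain ⟨⟨x1, x2⟩, hm, rfl⟩ := hx
    obtain ⟨⟨x1', x2'⟩, hm', rfl⟩ := hx'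
    obtain ⟨u, hu, h1, h2⟩ := hdir _ hm _ hm'
    exact ⟨u.1, ⟨u, hu, rfl⟩, h1.1, h2.1⟩
  · rintro x y ⟨⟨x1, x2⟩, hxm, rfl⟩ hyx
    exact ⟨(x1, y), hd hxm ⟨hrefl x1, hyx⟩, rfl⟩
  · rintro x hx x' hx'
    obtain ⟨⟨x1, x2⟩, hm, rfl⟩ := hx
    obtain ⟨⟨x1', x2'⟩, hm', rfl⟩ := hx'
    obtain ⟨u, hu, h1, h2⟩ := hdir _ hm _ hm'
    exact ⟨u.2, ⟨u, hu, rfl⟩, h1.2, h2.2⟩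
  · apply Set.Subset.antisymm
    · rintro ⟨x, y⟩ hxy
      exact ⟨⟨(x, y), hxy, rfl⟩, ⟨(x, y), hxy, rfl⟩⟩
    · rintro ⟨x, y⟩ ⟨⟨⟨x1, x2⟩, hm, hx⟩, ⟨⟨y1, y2⟩, hm', hy⟩⟩
      simp only at hx hy
      subst hx; subst hy
      obtain ⟨u, hu, h1, h2⟩ := hdir _ hm _ hm'
      exact hd hu ⟨h1.1, h2.2⟩

lemma prod_eq_prod {A A' : Set X} {B B' : Set X'} (hA : A.Nonempty) (hB : B.Nonempty)
    (h : A ×ˢ B = A' ×ˢ B') : A = A' ∧ B = B' := by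
  have hB' : B'.Nonempty := by
    obtain ⟨a, ha⟩ := hA; obtain ⟨b, hb⟩ := hB
    have : (a, b) ∈ A' ×ˢ B' := h ▸ ⟨ha, hb⟩
    exact ⟨(a, b).2, this.2⟩
  have hA' : A'.Nonempty := by
    obtain ⟨a, ha⟩ := hA; obtain ⟨b, hb⟩ := hB
    have : (a, b) ∈ A' ×ˢ B' := h ▸ ⟨ha, hb⟩
    exact ⟨(a, b).1, this.1⟩
  constructor
  · have := congrArg (Set.image Prod.fst) h
    rwa [Set.fst_image_prod _ hB, Set.fst_image_prod _ hB'] at this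
  · have := congrArg (Set.image Prod.snd) h
    rwa [Set.snd_image_prod hA, Set.snd_image_prod hA'] at this

lemma maxIdeal_prod (hrefl : Reflexive r) (hrefl' : Reflexive r')
    {D : Set X} {D' : Set X'} {Y : Set X} {J : Set X'} :
    (MaxIdealOf r Y D ∧ MaxIdealOf r' J D') ↔
      MaxIdealOf (rProd r r') (Y ×ˢ J) (D ×ˢ D') := by
  constructor
  · rintro ⟨⟨hYi, hYD, hYmax⟩, ⟨hJi, hJD, hJmax⟩⟩
    refine ⟨isIdeal_prod hYi hJi, Set.prod_mono hYD hJD, ?_⟩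
    intro Z' hZ'i hZ'D hsub
    obtain ⟨h1, h2, h3⟩ := ideal_decomp hrefl hrefl' hZ'i
    have hZne : Z'.Nonempty := hZ'i.1
    have hfD : Prod.fst '' Z' ⊆ D := by
      rintro x ⟨z, hz, rfl⟩; exact (hZ'D hz).1
    have hsD : Prod.snd '' Z' ⊆ D' := by
      rintro x ⟨z, hz, rfl⟩; exact (hZ'D hz).2
    have hYsub : Y ⊆ Prod.fst '' Z' := by
      intro y hy
      obtain ⟨j, hj⟩ := hJi.1
      exact ⟨(y, j), hsub ⟨hy, hj⟩, rfl⟩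
    have hJsub : J ⊆ Prod.snd '' Z' := by
      intro j hj
      obtain ⟨y, hy⟩ := hYi.1
      exact ⟨(y, j), hsub ⟨hy, hj⟩, rfl⟩
    rw [h3, hYmax _ h1 hfD hYsub, hJmax _ h2 hsD hJsub]
  · rintro ⟨hi, hsubD, hmax⟩
    obtain ⟨yj, hyj⟩ := hi.1
    have hYne : Y.Nonempty := ⟨yj.1, hyj.1⟩
    have hJne : J.Nonempty := ⟨yj.2, hyj.2⟩
    have hYi : IsIdeal r Y := by
      refine ⟨hYne, ?_, ?_⟩
      · intro x y hx hyx
        obtain ⟨j, hj⟩ := hJne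
        have h1 : (x, j) ∈ Y ×ˢ J := ⟨hx, hj⟩
        have h2 : rProd r r' (y, j) (x, j) := ⟨hyx, hrefl' j⟩
        exact (hi.2.1 h1 h2).1
      · intro x hx x' hx'
        obtain ⟨j, hj⟩ := hJne
        obtain ⟨u, hu, h1, h2⟩ := hi.2.2 (x, j) ⟨hx, hj⟩ (x', j) ⟨hx', hj⟩
        exact ⟨u.1, hu.1, h1.1, h2.1⟩
    have hJi : IsIdeal r' J := by
      refine ⟨hJne, ?_, ?_⟩
      · intro x y hx hyx
        obtain ⟨i0, hi0⟩ := hYne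
        have h1 : (i0, x) ∈ Y ×ˢ J := ⟨hi0, hx⟩
        have h2 : rProd r r' (i0, y) (i0, x) := ⟨hrefl i0, hyx⟩
        exact (hi.2.1 h1 h2).2
      · intro x hx x' hx'
        obtain ⟨i0, hi0⟩ := hYne
        obtain ⟨u, hu, h1, h2⟩ := hi.2.2 (i0, x) ⟨hi0, hx⟩ (i0, x') ⟨hi0, hx'⟩
        exact ⟨u.2, hu.2, h1.2, h2.2⟩
    have hYD : Y ⊆ D := by
      intro y hy; obtain ⟨j, hj⟩ := hJne
      have : (y, j) ∈ Y ×ˢ J := ⟨hy, hj⟩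
      exact (hsubD this).1
    have hJD : J ⊆ D' := by
      intro j hj; obtain ⟨y, hy⟩ := hYne
      have : (y, j) ∈ Y ×ˢ J := ⟨hy, hj⟩
      exact (hsubD this).2
    refine ⟨⟨hYi, hYD, ?_⟩, ⟨hJi, hJD, ?_⟩⟩
    · intro Y' hY'i hY'D hYY'
      have := hmax (Y' ×ˢ J) (isIdeal_prod hY'i hJi) (Set.prod_mono hY'D hJD)
        (Set.prod_mono hYY' (le_refl J)) 
      exact (prod_eq_prod hY'i.1 hJne this).1
    · intro J' hJ'i hJ'D hJJ'
      have := hmax (Y ×ˢ J') (isIdeal_prod hYi hJ'i) (Set.prod_mono hYD hJ'D)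
        (Set.prod_mono (le_refl Y) hJJ')
      exact (prod_eq_prod hYne hJ'i.1 this).2

lemma downClosure_prod {U : Set X} {U' : Set X'} :
    downClosure (rProd r r') (U ×ˢ U') = downClosure r U ×ˢ downClosure r' U' := by
  ext ⟨x, y⟩
  constructor
  · rintro ⟨⟨u, u'⟩, ⟨hu, hu'⟩, h1, h2⟩
    exact ⟨⟨u, hu, h1⟩, ⟨u', hu', h2⟩⟩
  · rintro ⟨⟨u, hu, h1⟩, ⟨u', hu', h2⟩⟩
    exact ⟨(u, u'), ⟨hu, hu'⟩, h1, h2⟩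

end Helpers

/-- The synchronized product of the ideal completions of two UWSTS is
isomorphic to the ideal completion of their synchronized product, via the map
sending a pair of ideals `(Y, Y')` to the product ideal `Y ×ˢ Y'`. -/
theorem idealCompletion_product_iso
    {S S' A : Type*}
    (T : S → A → S → Prop) (pre : S → S → Prop) (I F : Set S)
    (hrefl : Reflexive pre) (htrans : Transitive pre)
    (hwqo : ∀ f : ℕ → S, ∃ i j : ℕ, i < j ∧ pre (f i) (f j))
    (hcompat : ∀ ⦃s s' r : S⦄ ⦃a : A⦄, pre s s' → T s a r →
      ∃ r', T s' a r' ∧ pre r r')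
    (hFup : ∀ ⦃f f'⦄, f ∈ F → pre f f' → f' ∈ F)
    (T' : S' → A → S' → Prop) (pre' : S' → S' → Prop) (I' F' : Set S')
    (hrefl' : Reflexive pre') (htrans' : Transitive pre')
    (hwqo' : ∀ f : ℕ → S', ∃ i j : ℕ, i < j ∧ pre' (f i) (f j))
    (hcompat' : ∀ ⦃s s' r : S'⦄ ⦃a : A⦄, pre' s s' → T' s a r →
      ∃ r', T' s' a r' ∧ pre' r r')
    (hFup' : ∀ ⦃f f'⦄, f ∈ F' → pre' f f' → f' ∈ F') :
    -- the product order on `S × S'`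
    let prex : S × S' → S × S' → Prop := fun p q => pre p.1 q.1 ∧ pre' p.2 q.2
    -- the product transition relation
    let Tx : S × S' → A → S × S' → Prop :=
      fun p a q => T p.1 a q.1 ∧ T' p.2 a q.2
    -- the map is injective on pairs of ideals
    (∀ Y₁ Y₂ : Set S, ∀ J₁ J₂ : Set S',
      IsIdeal pre Y₁ → IsIdeal pre' J₁ → IsIdeal pre Y₂ → IsIdeal pre' J₂ →
      Y₁ ×ˢ J₁ = Y₂ ×ˢ J₂ → Y₁ = Y₂ ∧ J₁ = J₂) ∧
    -- the map is a surjection onto the ideals of the product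
    (∀ Z : Set (S × S'), IsIdeal prex Z →
      ∃ Y : Set S, ∃ J : Set S', IsIdeal pre Y ∧ IsIdeal pre' J ∧ Z = Y ×ˢ J) ∧
    -- the map sends ideals to ideals
    (∀ (Y : Set S) (J : Set S'), IsIdeal pre Y → IsIdeal pre' J →
      IsIdeal prex (Y ×ˢ J)) ∧
    -- the map preserves and reflects the order
    (∀ Y₁ Y₂ : Set S, ∀ J₁ J₂ : Set S',
      IsIdeal pre Y₁ → IsIdeal pre' J₁ → IsIdeal pre Y₂ → IsIdeal pre' J₂ →
      ((Y₁ ⊆ Y₂ ∧ J₁ ⊆ J₂) ↔ Y₁ ×ˢ J₁ ⊆ Y₂ ×ˢ J₂)) ∧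
    -- the map preserves and reflects initial configurations
    (∀ (Y : Set S) (J : Set S'),
      (MaxIdealOf pre Y (downClosure pre I) ∧
        MaxIdealOf pre' J (downClosure pre' I')) ↔
      MaxIdealOf prex (Y ×ˢ J) (downClosure prex (I ×ˢ I'))) ∧
    -- the map preserves and reflects final configurations
    (∀ (Y : Set S) (J : Set S'), IsIdeal pre Y → IsIdeal pre' J →
      (((Y ∩ F).Nonempty ∧ (J ∩ F').Nonempty) ↔
        ((Y ×ˢ J) ∩ (F ×ˢ F')).Nonempty)) ∧
    -- the map preserves and reflects the transition relation
    (∀ (a : A) (Y Z : Set S) (J Z' : Set S'),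
      IsIdeal pre Y → IsIdeal pre' J →
      ((MaxIdealOf pre Z (downClosure pre (Succ T a Y)) ∧
          MaxIdealOf pre' Z' (downClosure pre' (Succ T' a J))) ↔
        MaxIdealOf prex (Z ×ˢ Z')
          (downClosure prex (Succ Tx a (Y ×ˢ J))))) := by
  intro prex Tx
  refine ⟨?_, ?_, ?_, ?_, ?_, ?_, ?_⟩
  · intro Y₁ Y₂ J₁ J₂ h1 h2 h3 h4 heq
    exact prod_eq_prod h1.1 h2.1 heq
  · intro Z hZ
    obtain ⟨hf, hs, hZeq⟩ := ideal_decomp hrefl hrefl' hZ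
    exact ⟨_, _, hf, hs, hZeq⟩
  · intro Y J hY hJ
    exact isIdeal_prod hY hJ
  · intro Y₁ Y₂ J₁ J₂ h1 h2 h3 h4
    constructor
    · rintro ⟨ha, hb⟩
      exact Set.prod_mono ha hb
    · intro h
      constructor
      · intro y hy
        obtain ⟨j, hj⟩ := h2.1
        have hm : (y, j) ∈ Y₁ ×ˢ J₁ := ⟨hy, hj⟩
        exact (h hm).1
      · intro j hj
        obtain ⟨y, hy⟩ := h1.1
        have hm : (y, j) ∈ Y₁ ×ˢ J₁ := ⟨hy, hj⟩
        exact (h hm).2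
  · intro Y J
    have h := maxIdeal_prod (r := pre) (r' := pre') hrefl hrefl'
      (D := downClosure pre I) (D' := downClosure pre' I') (Y := Y) (J := J)
    rw [← downClosure_prod] at h
    exact h
  · intro Y J hY hJ
    constructor
    · rintro ⟨⟨y, hy⟩, ⟨j, hj⟩⟩
      exact ⟨(y, j), ⟨hy.1, hj.1⟩, ⟨hy.2, hj.2⟩⟩
    · rintro ⟨⟨y, j⟩, ⟨hYJ, hFF⟩⟩
      exact ⟨⟨y, hYJ.1, hFF.1⟩, ⟨j, hYJ.2, hFF.2⟩⟩
  · intro a Y Z J Z' hY hJ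
    have hsucc : Succ (fun (p : S × S') (a : A) (q : S × S') => T p.1 a q.1 ∧ T' p.2 a q.2)
        a (Y ×ˢ J) = Succ T a Y ×ˢ Succ T' a J := by
      ext ⟨t, t'⟩
      constructor
      · rintro ⟨⟨s, s'⟩, ⟨hs, hs'⟩, hT1, hT2⟩
        exact ⟨⟨s, hs, hT1⟩, ⟨s', hs', hT2⟩⟩
      · rintro ⟨⟨s, hs, hT1⟩, ⟨s', hs', hT2⟩⟩
        exact ⟨(s, s'), ⟨hs, hs'⟩, hT1, hT2⟩
    have h := maxIdeal_prod (r := pre) (r' := pre') hrefl hrefl'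
      (D := downClosure pre (Succ T a Y)) (D' := downClosure pre' (Succ T' a J))
      (Y := Z) (J := Z')
    rw [← downClosure_prod, ← hsucc] at h
    exact h
end

section
/- Every finitely-branching UWSTS is equivalent (recognizes the same language) to a deterministic UWSTS; concretely, the powerset-style system whose configurations are finitary downward-closed subsets of S ordered by inclusion, with unique initial configuration ↓I, deterministic transitions X →ᵃ ↓Succ_a(X), and final configurations those sets intersecting F, is a deterministic UWSTS with the same language. -/
/-!
The finitary downward-closed sets are well quasi-ordered by inclusion by Higman's lemma: listing
the finite generators, a sublist embedding of generator lists gives inclusion of their closures.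
Upward compatibility makes `↓Succ_a(↓U) = ↓Succ_a(U)`, so by induction on the word the run of
the determinized system on `w` from `↓I` is the downward closure of the configurations reached
from `I` along `w`; as `F` is upward closed, that set meets `F` iff one of them lies in `F`.
-/

theorem List.SublistForall₂.exists_mem_of_mem {α : Type*} {r : α → α → Prop}
    {l₁ l₂ : List α} (h : List.SublistForall₂ r l₁ l₂) {a : α} (ha : a ∈ l₁) :
    ∃ b ∈ l₂, r a b := by
  induction h with
  | nil => simp at ha
  | cons hr _ ih =>
    rcases List.mem_cons.1 ha with rfl | ha
    · exact ⟨_, List.mem_cons_self, hr⟩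
    · obtain ⟨b, hb, hab⟩ := ih ha
      exact ⟨b, List.mem_cons_of_mem _ hb, hab⟩
  | cons_right _ ih =>
    obtain ⟨b, hb, hab⟩ := ih ha
    exact ⟨b, List.mem_cons_of_mem _ hb, hab⟩

section DownClosure

variable {X : Type*} {r : X → X → Prop}

theorem downClosure_mono {U V : Set X} (h : U ⊆ V) : downClosure r U ⊆ downClosure r V :=
  fun _ ⟨u, hu, hxu⟩ => ⟨u, h hu, hxu⟩

theorem finitaryDownClosed_partiallyWellOrderedOn [IsPreorder X r]
    (hwqo : WellQuasiOrdered r) :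
    {D | FinitaryDownClosed r D}.PartiallyWellOrderedOn (· ⊆ ·) := by
  have higman := (Set.partiallyWellOrderedOn_of_wellQuasiOrdered hwqo Set.univ)
    |>.partiallyWellOrderedOn_sublistForall₂ r
  have hsub : {D | FinitaryDownClosed r D} ⊆
      (fun l : List X => downClosure r {x | x ∈ l}) '' {l | ∀ x ∈ l, x ∈ Set.univ} := by
    rintro D ⟨U, hU, rfl⟩
    exact ⟨hU.toFinset.toList, fun _ _ => trivial, by simp⟩
  refine (higman.image_of_monotone_on fun l₁ _ l₂ _ h => ?_).mono hsub
  exact downClosure_subset_downClosure fun _ ha => h.exists_mem_of_mem ha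

end DownClosure

section Transitions

variable {S A : Type*} {T : S → A → S → Prop} {pre : S → S → Prop}

theorem succ_mono {a : A} {X Y : Set S} (h : X ⊆ Y) : Succ T a X ⊆ Succ T a Y :=
  fun _ ⟨s, hs, hT⟩ => ⟨s, h hs, hT⟩

theorem Set.Finite.succ {U : Set S} (hU : U.Finite)
    (hbranch : ∀ (s : S) (a : A), {r | T s a r}.Finite) (a : A) : (Succ T a U).Finite := by
  have : Succ T a U = ⋃ u ∈ U, {t | T u a t} := by ext; simp [Succ]
  exact this ▸ hU.biUnion fun u _ => hbranch u a

theorem downClosure_succ_downClosure [IsPreorder S pre]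
    (hcompat : ∀ ⦃s s' r : S⦄ ⦃a : A⦄, pre s s' → T s a r →
      ∃ r', T s' a r' ∧ pre r r')
    (a : A) (U : Set S) :
    downClosure pre (Succ T a (downClosure pre U)) = downClosure pre (Succ T a U) := by
  refine subset_antisymm (downClosure_subset_downClosure ?_) (downClosure_mono ?_)
  · rintro t ⟨s, ⟨u, hu, hsu⟩, hT⟩
    obtain ⟨t', hT', htt'⟩ := hcompat hsu hT
    exact ⟨t', ⟨u, hu, hT'⟩, htt'⟩
  · exact succ_mono fun u hu => ⟨u, hu, refl_of pre u⟩

theorem FinitaryDownClosed.downClosure_succ [IsPreorder S pre]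
    (hcompat : ∀ ⦃s s' r : S⦄ ⦃a : A⦄, pre s s' → T s a r →
      ∃ r', T s' a r' ∧ pre r r')
    (hbranch : ∀ (s : S) (a : A), {r | T s a r}.Finite) {X : Set S}
    (hX : FinitaryDownClosed pre X) (a : A) :
    FinitaryDownClosed pre (downClosure pre (Succ T a X)) := by
  obtain ⟨U, hU, rfl⟩ := hX
  exact ⟨Succ T a U, hU.succ hbranch a, downClosure_succ_downClosure hcompat a U⟩

end Transitions

section Runs

variable {S A : Type*}

theorem Reaches.nil_iff {T : S → A → S → Prop} {s t : S} : Reaches T s [] t ↔ t = s := by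
  refine ⟨fun h => ?_, by rintro rfl; exact .nil t⟩
  cases h
  rfl

theorem Reaches.cons_iff {T : S → A → S → Prop} {s t : S} {a : A} {w : List A} :
    Reaches T s (a :: w) t ↔ ∃ r, T s a r ∧ Reaches T r w t := by
  refine ⟨fun h => ?_, fun ⟨_, hT, h⟩ => Reaches.cons hT h⟩
  cases h with
  | cons hT h => exact ⟨_, hT, h⟩

theorem reaches_deterministic_iff (δ : S → A → S) {s t : S} {w : List A} :
    Reaches (fun s a t => t = δ s a) s w t ↔ t = w.foldl δ s := by
  induction w generalizing s with
  | nil => exact Reaches.nil_iff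
  | cons a w ih => simp [Reaches.cons_iff, ih]

theorem language_deterministic (δ : S → A → S) (s₀ : S) (F : Set S) :
    language (fun s a t => t = δ s a) {s₀} F = {w | w.foldl δ s₀ ∈ F} := by
  ext w
  simp [language, reaches_deterministic_iff]

variable {T : S → A → S → Prop} {pre : S → S → Prop}

theorem mem_foldl_downClosure_succ_iff [IsPreorder S pre]
    (hcompat : ∀ ⦃s s' r : S⦄ ⦃a : A⦄, pre s s' → T s a r →
      ∃ r', T s' a r' ∧ pre r r')
    (w : List A) (U : Set S) (t : S) :
    t ∈ w.foldl (fun X a => downClosure pre (Succ T a X)) (downClosure pre U) ↔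
      ∃ u ∈ U, ∃ t', Reaches T u w t' ∧ pre t t' := by
  induction w generalizing U with
  | nil => simp [downClosure, Reaches.nil_iff]
  | cons a w ih =>
    rw [List.foldl_cons, downClosure_succ_downClosure hcompat, ih]
    simp only [Succ, Set.mem_ofPred_eq, Reaches.cons_iff]
    grind

theorem language_determinization [IsPreorder S pre]
    (hcompat : ∀ ⦃s s' r : S⦄ ⦃a : A⦄, pre s s' → T s a r →
      ∃ r', T s' a r' ∧ pre r r')
    {I F : Set S} (hFup : ∀ ⦃f f'⦄, f ∈ F → pre f f' → f' ∈ F) :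
    language (fun (X : Set S) (a : A) (Y : Set S) => Y = downClosure pre (Succ T a X))
      {downClosure pre I} {X : Set S | (X ∩ F).Nonempty} = language T I F := by
  rw [language_deterministic]
  ext w
  simp only [Set.mem_ofPred_eq, Set.Nonempty, Set.mem_inter_iff,
    mem_foldl_downClosure_succ_iff hcompat, language]
  constructor
  · rintro ⟨f, ⟨i, hi, t, hit, hft⟩, hf⟩
    exact ⟨i, hi, t, hFup hf hft, hit⟩
  · rintro ⟨i, hi, f, hf, hif⟩
    exact ⟨f, ⟨i, hi, f, hif, refl_of pre f⟩, hf⟩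

end Runs

/-- Every finitely-branching UWSTS is equivalent to a deterministic UWSTS:
the powerset-style system on finitary downward-closed subsets, ordered by
inclusion, with unique initial configuration `↓I`, deterministic transitions
`X →ᵃ ↓Succ_a(X)` and final configurations the sets meeting `F`, is a
deterministic UWSTS recognizing the same language. -/
theorem finitely_branching_UWSTS_determinization
    {S A : Type*} (T : S → A → S → Prop) (pre : S → S → Prop)
    (I F : Set S)
    (hrefl : Reflexive pre) (htrans : Transitive pre)
    (hwqo : ∀ f : ℕ → S, ∃ i j : ℕ, i < j ∧ pre (f i) (f j))
    (hcompat : ∀ ⦃s s' r : S⦄ ⦃a : A⦄, pre s s' → T s a r →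
      ∃ r', T s' a r' ∧ pre r r')
    (hFup : ∀ ⦃f f'⦄, f ∈ F → pre f f' → f' ∈ F)
    -- finite branching
    (hIfin : I.Finite)
    (hbranch : ∀ (s : S) (a : A), {r | T s a r}.Finite) :
    -- the state space (finitary downward-closed sets ordered by inclusion) is a wqo
    (∀ f : ℕ → Set S, (∀ n, FinitaryDownClosed pre (f n)) →
      ∃ i j : ℕ, i < j ∧ f i ⊆ f j) ∧
    -- the initial configuration is a finitary downward-closed set
    FinitaryDownClosed pre (downClosure pre I) ∧
    -- transitions stay within the finitary downward-closed sets
    (∀ (X : Set S) (a : A), FinitaryDownClosed pre X →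
      FinitaryDownClosed pre (downClosure pre (Succ T a X))) ∧
    -- the transition relation is deterministic (by construction)
    (∀ (X : Set S) (a : A), ∃! Y : Set S, Y = downClosure pre (Succ T a X)) ∧
    -- upward compatibility of the powerset system w.r.t. inclusion
    (∀ (X Y : Set S) (a : A), X ⊆ Y →
      downClosure pre (Succ T a X) ⊆ downClosure pre (Succ T a Y)) ∧
    -- the set of final configurations is upward closed w.r.t. inclusion
    (∀ X Y : Set S, (X ∩ F).Nonempty → X ⊆ Y → (Y ∩ F).Nonempty) ∧
    -- the powerset system recognizes the same language
    language (fun (X : Set S) (a : A) (Y : Set S) => Y = downClosure pre (Succ T a X))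
      {downClosure pre I} {X : Set S | (X ∩ F).Nonempty} = language T I F := by
  have : IsPreorder S pre := { refl := hrefl, trans := fun _ _ _ => @htrans _ _ _ }
  exact ⟨fun _ hf => (finitaryDownClosed_partiallyWellOrderedOn hwqo).exists_lt hf,
    ⟨I, hIfin, rfl⟩,
    fun _ a hX => hX.downClosure_succ hcompat hbranch a,
    fun _ _ => ⟨_, rfl, fun _ hY => hY⟩,
    fun _ _ _ h => downClosure_mono (succ_mono h),
    fun _ _ hXF h => hXF.mono (Set.inter_subset_inter_left F h),
    language_determinization hcompat hFup⟩
end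

section
/- Let W be a deterministic UWSTS. Then for every ideal X of its state wqo and every letter a, the downward closure of Succ_a(X) is itself an ideal; consequently the ideal completion of W is deterministic. -/
/-- In a deterministic UWSTS, the downward closure of the successor set of an
ideal is itself an ideal; hence the ideal completion is deterministic. -/
theorem idealCompletion_deterministic
    {S A : Type*} (T : S → A → S → Prop) (pre : S → S → Prop)
    (I F : Set S)
    (hrefl : Reflexive pre) (htrans : Transitive pre)
    (hwqo : ∀ f : ℕ → S, ∃ i j : ℕ, i < j ∧ pre (f i) (f j))
    (hcompat : ∀ ⦃s s' r : S⦄ ⦃a : A⦄, pre s s' → T s a r →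
      ∃ r', T s' a r' ∧ pre r r')
    (hFup : ∀ ⦃f f'⦄, f ∈ F → pre f f' → f' ∈ F)
    -- determinism of `W`
    (hdetI : ∃ i₀ : S, I = {i₀})
    (hdetT : ∀ (s : S) (a : A), ∃! r : S, T s a r) :
    ∀ (X : Set S) (a : A), IsIdeal pre X →
      IsIdeal pre (downClosure pre (Succ T a X)) ∧
      ∃! Z : Set S, MaxIdealOf pre Z (downClosure pre (Succ T a X)) := by
  intro X a hX
  obtain ⟨hne, hdc, hdir⟩ := hX
  have hideal : IsIdeal pre (downClosure pre (Succ T a X)) := by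
    refine ⟨?_, ?_, ?_⟩
    · obtain ⟨s, hs⟩ := hne
      obtain ⟨r, hr, -⟩ := hdetT s a
      exact ⟨r, ⟨r, ⟨s, hs, hr⟩, hrefl r⟩⟩
    · rintro x y ⟨u, hu, hxu⟩ hyx
      exact ⟨u, hu, htrans hyx hxu⟩
    · rintro x ⟨u, ⟨s, hs, hsu⟩, hxu⟩ y ⟨v, ⟨t, ht, htv⟩, hyv⟩
      obtain ⟨w, hw, hsw, htw⟩ := hdir s hs t ht
      obtain ⟨r, hr, -⟩ := hdetT w a
      obtain ⟨r₁, hr₁, hur₁⟩ := hcompat hsw hsu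
      obtain ⟨r₂, hr₂, hvr₂⟩ := hcompat htw htv
      have e₁ : r₁ = r := (hdetT w a).unique hr₁ hr
      have e₂ : r₂ = r := (hdetT w a).unique hr₂ hr
      refine ⟨r, ⟨r, ⟨w, hw, hr⟩, hrefl r⟩, htrans hxu (e₁ ▸ hur₁),
        htrans hyv (e₂ ▸ hvr₂)⟩
  refine ⟨hideal, downClosure pre (Succ T a X),
    ⟨hideal, le_refl _, fun Z' _ h₁ h₂ => le_antisymm h₁ h₂⟩, ?_⟩
  rintro Z ⟨hZi, hZsub, hZmax⟩
  exact (hZmax _ hideal (le_refl _) hZsub).symm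
end
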